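/- Let P ∈ A be monic irreducible, G ∈ A nonzero, and let a ≥ 0 be the exact exponent of P in G (i.e. P^a ∣ G and P^{a+1} ∤ G). Then for every e ≥ 1: η(G, P^e) = |P|^e − |P|^{e−1} if 1 ≤ e ≤ a; η(G, P^e) = −|P|^a if e = a + 1; and η(G, P^e) = 0 if e > a + 1. -/

import Mathlib

open Polynomial UniqueFactorizationMonoid

variable (p : ℕ) [Fact p.Prime] (F : Type) [Field F] [Fintype F] [DecidableEq F]
  [Algebra (ZMod p) F]

/-- The absolute value `|G| = q ^ deg G` of a polynomial over `𝔽_q`. -/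
def anorm (G : Polynomial F) : ℕ := Fintype.card F ^ G.natDegree

/-- `t_H(A')`: the coefficient of `T^(m-1)` in the remainder of `A'` upon division by `H`,
where `m = deg H`. -/
noncomputable def tmap (H A' : Polynomial F) : F := (A' % H).coeff (H.natDegree - 1)

/-- The additive character `E(G,H)(D) = exp(2πi · tr(t_H(G·D)) / p)`. -/
noncomputable def echar (G H D : Polynomial F) : ℂ :=
  Complex.exp (2 * Real.pi * Complex.I *
    ((Algebra.trace (ZMod p) F (tmap F H (G * D))).val : ℂ) / (p : ℂ))

open scoped Classical in
/-- `ω(G)`: the number of distinct monic irreducible divisors of `G`. -/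
noncomputable def omega (G : Polynomial F) : ℕ := (normalizedFactors G).toFinset.card

open scoped Classical in
/-- The Möbius function on `𝔽_q[T]`. -/
noncomputable def mu (G : Polynomial F) : ℤ :=
  if Squarefree G then (-1) ^ omega F G else 0

/-- The polynomial Ramanujan sum `η(G,H)`: the sum of `E(G,H)(D)` over a complete residue
system `D` modulo `H` with `(D,H) = 1`. -/
noncomputable def eta (G H : Polynomial F) : ℂ :=
  ∑' D : {D : Polynomial F // D.degree < H.degree ∧ IsCoprime D H}, echar p F G H D.1

open scoped Classical in
/-- The unitary gcd `(G,H)_*`: the monic polynomial of highest degree dividing `G` and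
unitarily dividing `H`. -/
noncomputable def ugcd (G H : Polynomial F) : Polynomial F :=
  ∏ P ∈ (normalizedFactors H).toFinset,
    if P ^ (normalizedFactors H).count P ∣ G then P ^ (normalizedFactors H).count P else 1

/-- `μ*(G) = (-1)^(ω(G))`. -/
noncomputable def muStar (G : Polynomial F) : ℤ := (-1) ^ omega F G

/-- The unitary polynomial Ramanujan sum `η*(G,H)`: the sum of `E(G,H)(D)` over a complete
residue system `D` modulo `H` with `(D,H)_* = 1`. -/
noncomputable def etaStar (G H : Polynomial F) : ℂ :=
  ∑' D : {D : Polynomial F // D.degree < H.degree ∧ ugcd F D H = 1}, echar p F G H D.1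

/-! The complete sum of `E(G,H)` over all residues `D` modulo a monic `H` is the sum of the
additive character `ψ ∘ tr` (nontrivial because the trace is surjective) along the linear form
`D ↦ t_H(GD)`; it is `|H|` if `H ∣ G` and `0` otherwise, the form being nonzero exactly when
`H ∤ G`. Removing from the residues modulo `P^e` those divisible by `P`, i.e. `D = P D'` with `D'`
a residue modulo `P^(e-1)`, and using `t_{P^e}(P A) = t_{P^(e-1)}(A)`, gives
`η(G, P^e) = [P^e ∣ G] |P|^e - [P^(e-1) ∣ G] |P|^(e-1)`. -/

open scoped Classical in
theorem AddChar.sum_comp_linearMap_eq_ite {K V : Type*} [Field K] [AddCommGroup V] [Module K V]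
    [Fintype V] {ψ : AddChar K ℂ} (hψ : ψ ≠ 0) (L : V →ₗ[K] K) :
    ∑ x, ψ (L x) = if L = 0 then (Fintype.card V : ℂ) else 0 := by
  refine (AddChar.sum_eq_ite (ψ.compAddMonoidHom L.toAddMonoidHom)).trans <|
    if_congr ⟨fun h => ?_, fun h => by ext x; simp [h]⟩ rfl rfl
  by_contra hL
  refine hψ (AddChar.compAddMonoidHom_injective_left L.toAddMonoidHom
    (LinearMap.surjective_of_ne_zero hL) ?_)
  ext x
  simpa using DFunLike.congr_fun h x

theorem Polynomial.mul_modByMonic_of_degree_lt {R : Type*} [CommRing R] [Nontrivial R]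
    {H A B : R[X]} (hH : H.Monic) (hAB : (A %ₘ H * B).degree < H.degree) :
    (A * B) %ₘ H = A %ₘ H * B := by
  have hdvd : H ∣ A * B - A %ₘ H * B := by
    rw [← sub_mul]
    exact (dvd_sub_comm.mp (dvd_modByMonic_sub A H)).mul_right B
  rw [modByMonic_eq_of_dvd_sub hH hdvd, (modByMonic_eq_self_iff hH).mpr hAB]

theorem Polynomial.mul_modByMonic_mul {R : Type*} [CommRing R] [IsDomain R] {P H : R[X]}
    (hP : P.Monic) (hH : H.Monic) (A : R[X]) : (P * A) %ₘ (P * H) = P * (A %ₘ H) := by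
  have hdvd : P * H ∣ P * A - P * (A %ₘ H) := by
    rw [← mul_sub]
    exact mul_dvd_mul_left P (dvd_sub_comm.mp (dvd_modByMonic_sub A H))
  rw [modByMonic_eq_of_dvd_sub (hP.mul hH) hdvd, (modByMonic_eq_self_iff (hP.mul hH)).mpr]
  rw [degree_mul, degree_mul]
  exact WithBot.add_lt_add_left (degree_ne_bot.mpr hP.ne_zero) (degree_modByMonic_lt A hH)

section

omit [Fintype F] [DecidableEq F]

noncomputable def traceChar : AddChar F ℂ :=
  ZMod.stdAddChar.compAddMonoidHom (Algebra.trace (ZMod p) F).toAddMonoidHom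

theorem traceChar_ne_zero [Finite F] : traceChar p F ≠ 0 := by
  obtain ⟨x, hx⟩ := Algebra.trace_surjective (ZMod p) F 1
  refine AddChar.ne_zero_iff.mpr ⟨x, fun h => one_ne_zero (α := ZMod p) ?_⟩
  rw [traceChar, AddChar.compAddMonoidHom_apply,
    ← AddChar.map_zero_eq_one (ZMod.stdAddChar (N := p))] at h
  simpa [hx] using ZMod.injective_stdAddChar h

theorem echar_eq_traceChar (G H D : F[X]) :
    echar p F G H D = traceChar p F (tmap F H (G * D)) := by
  rw [echar, traceChar, AddChar.compAddMonoidHom_apply, ZMod.stdAddChar_apply,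
    ZMod.toCircle_apply]
  rfl

theorem tmap_eq_coeff_modByMonic {H : F[X]} (hH : H.Monic) (A : F[X]) :
    tmap F H A = (A %ₘ H).coeff (H.natDegree - 1) := by
  rw [tmap, modByMonic_eq_mod A hH]

theorem tmap_mul_mul {P H : F[X]} (hP : P.Monic) (hH : H.Monic) (A : F[X]) :
    tmap F (P * H) (P * A) = tmap F H A := by
  rw [tmap_eq_coeff_modByMonic F (hP.mul hH), tmap_eq_coeff_modByMonic F hH,
    mul_modByMonic_mul hP hH, hP.natDegree_mul hH]
  rcases eq_or_ne H 1 with rfl | hH1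
  · simp
  have hn : H.natDegree ≠ 0 := fun h => hH1 (hH.natDegree_eq_zero.mp h)
  rw [Nat.add_sub_assoc (Nat.one_le_iff_ne_zero.mpr hn), coeff_mul_add_eq_of_natDegree_le le_rfl
    (Nat.le_sub_one_of_lt (natDegree_modByMonic_lt A hH hH1)), hP.coeff_natDegree, one_mul]

noncomputable def tmapMulLeft (G H : F[X]) : degreeLT F H.natDegree →ₗ[F] F :=
  lcoeff F (H.natDegree - 1) ∘ₗ modByMonicHom H ∘ₗ LinearMap.mulLeft F G ∘ₗ
    (degreeLT F H.natDegree).subtype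

theorem tmapMulLeft_apply {G H : F[X]} (hH : H.Monic) (D : degreeLT F H.natDegree) :
    tmapMulLeft F G H D = tmap F H (G * D) := by
  rw [tmap_eq_coeff_modByMonic F hH]
  rfl

theorem tmapMulLeft_eq_zero_iff {G H : F[X]} (hH : H.Monic) :
    tmapMulLeft F G H = 0 ↔ H ∣ G := by
  refine ⟨fun h => ?_, fun h => ?_⟩
  · by_contra hGH
    have hR : G %ₘ H ≠ 0 := fun h0 => hGH ((modByMonic_eq_zero_iff_dvd hH).mp h0)
    have hH1 : H ≠ 1 := by rintro rfl; exact hGH (one_dvd G)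
    set n := H.natDegree
    set d := (G %ₘ H).natDegree
    have hdn : d < n := natDegree_modByMonic_lt G hH hH1
    -- `D = X ^ k` moves the leading coefficient of `G mod H` to the coefficient of `T^(n-1)`.
    obtain ⟨k, hk⟩ : ∃ k, n - 1 = d + k := ⟨n - 1 - d, by omega⟩
    have hX : X ^ k ∈ degreeLT F n := by
      rw [mem_degreeLT, degree_X_pow]
      exact_mod_cast (by omega : k < n)
    have hmod : (G * X ^ k) %ₘ H = G %ₘ H * X ^ k := by
      refine mul_modByMonic_of_degree_lt hH ?_
      rw [degree_mul, degree_X_pow, degree_eq_natDegree hR, degree_eq_natDegree hH.ne_zero]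
      exact_mod_cast (by omega : d + k < n)
    have h0 : tmapMulLeft F G H ⟨_, hX⟩ = 0 := by rw [h, LinearMap.zero_apply]
    rw [tmapMulLeft_apply F hH, tmap_eq_coeff_modByMonic F hH, hmod, hk, coeff_mul_X_pow] at h0
    exact hR (leadingCoeff_eq_zero.mp h0)
  · ext D
    rw [tmapMulLeft_apply F hH, tmap_eq_coeff_modByMonic F hH,
      (modByMonic_eq_zero_iff_dvd hH).mpr (h.mul_right _)]
    rfl

end

section

omit [DecidableEq F]

open scoped Classical

noncomputable instance Polynomial.fintypeDegreeLT (n : ℕ) : Fintype (degreeLT F n) :=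
  Fintype.ofEquiv _ (degreeLTEquiv F n).symm.toEquiv

theorem card_degreeLT (n : ℕ) : Fintype.card (degreeLT F n) = Fintype.card F ^ n := by
  rw [Fintype.card_congr (degreeLTEquiv F n).toEquiv, Fintype.card_fun, Fintype.card_fin]

theorem anorm_pow (P : F[X]) (e : ℕ) : anorm F (P ^ e) = anorm F P ^ e := by
  rw [anorm, anorm, natDegree_pow, ← pow_mul, mul_comm]

noncomputable def degreeLTFinset (n : ℕ) : Finset F[X] :=
  Finset.univ.map (Function.Embedding.subtype (· ∈ degreeLT F n))

theorem mem_degreeLTFinset {n : ℕ} {D : F[X]} : D ∈ degreeLTFinset F n ↔ D.degree < n := by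
  simp [degreeLTFinset, mem_degreeLT]

theorem sum_echar_degreeLTFinset {G H : F[X]} (hH : H.Monic) :
    ∑ D ∈ degreeLTFinset F H.natDegree, echar p F G H D
      = if H ∣ G then (anorm F H : ℂ) else 0 := by
  simp_rw [degreeLTFinset, Finset.sum_map, Function.Embedding.coe_subtype, echar_eq_traceChar,
    ← tmapMulLeft_apply F hH, AddChar.sum_comp_linearMap_eq_ite (traceChar_ne_zero p F),
    tmapMulLeft_eq_zero_iff F hH, card_degreeLT, anorm]

theorem filter_dvd_degreeLTFinset {P : F[X]} [DecidablePred (P ∣ ·)] (hP : P ≠ 0) (n : ℕ) :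
    (degreeLTFinset F (P.natDegree + n)).filter (P ∣ ·)
      = (degreeLTFinset F n).map ⟨(P * ·), mul_right_injective₀ hP⟩ := by
  ext D
  simp only [Finset.mem_filter, Finset.mem_map, Function.Embedding.coeFn_mk, mem_degreeLTFinset]
  constructor
  · rintro ⟨hD, Q, rfl⟩
    refine ⟨Q, ?_, rfl⟩
    rw [degree_mul, degree_eq_natDegree hP, Nat.cast_add] at hD
    exact (WithBot.add_lt_add_iff_left WithBot.coe_ne_bot).mp hD
  · rintro ⟨Q, hQ, rfl⟩
    refine ⟨?_, dvd_mul_right P Q⟩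
    rw [degree_mul, degree_eq_natDegree hP, Nat.cast_add]
    exact (WithBot.add_lt_add_iff_left WithBot.coe_ne_bot).mpr hQ

theorem sum_echar_filter_dvd {G P H : F[X]} [DecidablePred (P ∣ ·)] (hP : P.Monic)
    (hH : H.Monic) :
    ∑ D ∈ (degreeLTFinset F (P * H).natDegree).filter (P ∣ ·), echar p F G (P * H) D
      = ∑ D ∈ degreeLTFinset F H.natDegree, echar p F G H D := by
  rw [hP.natDegree_mul hH, filter_dvd_degreeLTFinset F hP.ne_zero, Finset.sum_map]
  refine Finset.sum_congr rfl fun D _ => ?_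
  rw [Function.Embedding.coeFn_mk, echar_eq_traceChar, echar_eq_traceChar, mul_left_comm,
    tmap_mul_mul F hP hH]

theorem eta_eq_sum_filter {G H : F[X]} (hH : H ≠ 0) :
    eta p F G H
      = ∑ D ∈ (degreeLTFinset F H.natDegree).filter (IsCoprime · H), echar p F G H D := by
  rw [_root_.eta, ← Finset.tsum_subtype]
  refine (Equiv.tsum_eq (Equiv.subtypeEquivRight fun D => ?_) _).symm
  rw [Finset.mem_filter, mem_degreeLTFinset, degree_eq_natDegree hH]

theorem eta_prime_pow_eq {G P : F[X]} (hP : P.Monic) (hirr : Irreducible P) {e : ℕ}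
    (he : 1 ≤ e) :
    eta p F G (P ^ e) = (if P ^ e ∣ G then (anorm F P : ℂ) ^ e else 0)
      - (if P ^ (e - 1) ∣ G then (anorm F P : ℂ) ^ (e - 1) else 0) := by
  have hPe : P ^ e = P * P ^ (e - 1) := by rw [← pow_succ', Nat.sub_add_cancel he]
  have hcop : ∀ D, IsCoprime D (P ^ e) ↔ ¬ P ∣ D := fun D => by
    rw [IsCoprime.pow_right_iff (by omega), isCoprime_comm, hirr.coprime_iff_not_dvd]
  have hsplit := Finset.sum_filter_add_sum_filter_not (degreeLTFinset F (P ^ e).natDegree)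
    (P ∣ ·) (echar p F G (P ^ e))
  rw [hPe, sum_echar_filter_dvd p F hP (hP.pow (e - 1)), ← hPe,
    sum_echar_degreeLTFinset p F (hP.pow e), sum_echar_degreeLTFinset p F (hP.pow (e - 1)),
    anorm_pow, anorm_pow, Nat.cast_pow, Nat.cast_pow] at hsplit
  rw [eta_eq_sum_filter p F (hP.pow e).ne_zero, Finset.filter_congr fun D _ => hcop D, ← hsplit,
    add_sub_cancel_left]

end

theorem eta_prime_pow (P : Polynomial F) (hP : P.Monic) (hirr : Irreducible P)
    (G : Polynomial F) (a : ℕ) (ha : P ^ a ∣ G) (ha' : ¬ P ^ (a + 1) ∣ G)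
    (e : ℕ) (he : 1 ≤ e) :
    (e ≤ a → eta p F G (P ^ e) = (anorm F P : ℂ) ^ e - (anorm F P : ℂ) ^ (e - 1)) ∧
    (e = a + 1 → eta p F G (P ^ e) = -(anorm F P : ℂ) ^ a) ∧
    (a + 1 < e → eta p F G (P ^ e) = 0) := by
  have hdvd : ∀ k, P ^ k ∣ G ↔ k ≤ a := fun k =>
    ⟨fun hk => by_contra fun hka => ha' ((pow_dvd_pow P (by omega)).trans hk),
      fun hk => (pow_dvd_pow P hk).trans ha⟩
  simp only [eta_prime_pow_eq p F hP hirr he, hdvd]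
  refine ⟨fun h => ?_, fun h => ?_, fun h => ?_⟩
  · rw [if_pos h, if_pos (by omega)]
  · rw [if_neg (by omega), if_pos (by omega), zero_sub, h, Nat.add_sub_cancel]
  · rw [if_neg (by omega), if_neg (by omega), sub_zero]
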